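/- arXiv:0707.3129 — 6 statements merged into one kernel-verified Lean document; each statement's English description precedes it below -/
import Mathlib

section
/- Let q, t be complex numbers that are not roots of unity, and let n, m be positive integers. The system of equations $\sum_{i=1}^n x_i^k + \frac{1-q^k}{1-t^k}\sum_{j=1}^m y_j^k = 0$ for $k = 1, \dots, n+m$ has a nonzero solution $(x_1,\dots,x_n,y_1,\dots,y_m) \in \mathbb{C}^{n+m}$ if and only if $t^i q^j = 1$ for some integers $1 \le i \le n$ and $1 \le j \le m$. -/
open Finset

/-!
Clearing the denominator, the `k`-th equation says that `z = (x, y)` and `w = (t x, q y)` have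
the same `k`-th power sum. By Newton's identities, equal power sums up to the length of the vectors
force equal multisets of entries, so `z ∘ σ = w` for some permutation `σ`. Along the cycle of `σ`
through a nonzero entry of `z` the multipliers multiply to `1`, giving `t ^ i * q ^ j = 1`, where
`i ≤ n` and `j ≤ m` count the cycle's entries in the two blocks; neither count vanishes since
neither `t` nor `q` is a root of unity. Conversely, if `t ^ i * q ^ j = 1`, then
`x = (1, t, …, t ^ (i - 1), 0, …)` and `y = t ^ i (1, q, …, q ^ (j - 1), 0, …)` solve the system.
-/

theorem Multiset.eq_of_card_eq_of_esymm_eq {R : Type*} [CommRing R] [IsDomain R]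
    {s t : Multiset R} (hcard : card s = card t) (h : ∀ k ≤ card s, s.esymm k = t.esymm k) :
    s = t := by
  have hprod : (s.map fun a => Polynomial.X - Polynomial.C a).prod
      = (t.map fun a => Polynomial.X - Polynomial.C a).prod := by
    rw [Multiset.prod_X_sub_X_eq_sum_esymm, Multiset.prod_X_sub_X_eq_sum_esymm, ← hcard]
    refine Finset.sum_congr rfl fun k hk => ?_
    rw [h k (Nat.lt_succ_iff.mp (mem_range.mp hk))]
  simpa only [Polynomial.roots_multiset_prod_X_sub_C] using congrArg Polynomial.roots hprod

open MvPolynomial in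
theorem MvPolynomial.aeval_esymm_eq_of_aeval_psum_eq {σ K : Type*} [Fintype σ] [Field K]
    [CharZero K] {f g : σ → K} {d : ℕ}
    (h : ∀ k, 1 ≤ k → k ≤ d → aeval f (psum σ K k) = aeval g (psum σ K k)) :
    ∀ k ≤ d, aeval f (esymm σ K k) = aeval g (esymm σ K k) := by
  intro k
  induction k using Nat.strong_induction_on with
  | _ k ih =>
    intro hk
    rcases Nat.eq_zero_or_pos k with rfl | hk0
    · simp
    refine mul_left_cancel₀ (Nat.cast_ne_zero.mpr hk0.ne' : (k : K) ≠ 0) ?_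
    have newton_f := congrArg (aeval f) (mul_esymm_eq_sum σ K k)
    have newton_g := congrArg (aeval g) (mul_esymm_eq_sum σ K k)
    simp only [map_mul, map_natCast, map_pow, map_sum, map_neg, map_one] at newton_f newton_g
    rw [newton_f, newton_g]
    refine congrArg _ (Finset.sum_congr rfl fun a ha => ?_)
    obtain ⟨hak, hlt⟩ := Finset.mem_filter.mp ha
    rw [HasAntidiagonal.mem_antidiagonal] at hak
    rw [ih a.1 hlt (by omega), h a.2 (by omega) (by omega)]

theorem Multiset.map_univ_eq_of_sum_pow_eq {σ K : Type*} [Fintype σ] [Field K] [CharZero K]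
    {f g : σ → K} (h : ∀ k, 1 ≤ k → k ≤ Fintype.card σ → ∑ i, f i ^ k = ∑ i, g i ^ k) :
    univ.val.map f = univ.val.map g := by
  refine Multiset.eq_of_card_eq_of_esymm_eq (by simp) fun k hk => ?_
  simp only [← MvPolynomial.aeval_esymm_eq_multiset_esymm σ K]
  refine MvPolynomial.aeval_esymm_eq_of_aeval_psum_eq (fun k hk1 hkd => ?_) k (by simpa using hk)
  simpa [MvPolynomial.psum] using h k hk1 hkd

theorem Equiv.Perm.exists_comp_eq_of_map_univ_eq {σ α : Type*} [Fintype σ]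
    {f g : σ → α} (h : univ.val.map f = univ.val.map g) : ∃ e : Perm σ, ∀ i, f (e i) = g i := by
  classical
  have hfiber (a : α) : Fintype.card {i // g i = a} = Fintype.card {i // f i = a} := by
    have := congrArg (Multiset.count a) h
    simp only [Multiset.count_map, Fintype.card_subtype] at this ⊢
    simpa [Finset.card_def, Finset.filter_val, eq_comm] using this.symm
  exact ⟨Equiv.ofFiberEquiv fun a => Fintype.equivOfCardEq (hfiber a),
    Equiv.ofFiberEquiv_map _⟩

theorem Equiv.Perm.prod_sameCycle_eq_one {ι M : Type*} [Fintype ι] [DecidableEq ι]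
    [CommMonoidWithZero M] [IsCancelMulZero M] [Nontrivial M] (σ : Perm ι) {z c : ι → M}
    (h : ∀ i, z (σ i) = c i * z i) {s : ι} (hs : z s ≠ 0) :
    ∏ i ∈ univ.filter (σ.SameCycle s), c i = 1 := by
  set O := univ.filter (σ.SameCycle s)
  have hzero (i : ι) (hi : z i = 0) (k : ℕ) : z ((σ ^ k) i) = 0 := by
    induction k with
    | zero => exact hi
    | succ k ih => rw [pow_succ', Perm.mul_apply, h, ih, mul_zero]
  -- zeros of `z` propagate forward along `σ`, so `z` has no zero on the cycle of `s`
  have hO : ∏ i ∈ O, z i ≠ 0 := by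
    refine Finset.prod_ne_zero_iff.mpr fun i hi hzi => hs ?_
    obtain ⟨k, hk⟩ := (Finset.mem_filter.mp hi).2.symm.exists_nat_pow_eq
    rw [← hk]
    exact hzero i hzi k
  refine mul_right_cancel₀ hO ?_
  calc (∏ i ∈ O, c i) * ∏ i ∈ O, z i = ∏ i ∈ O, z (σ i) := by simp_rw [← prod_mul_distrib, h]
    _ = 1 * ∏ i ∈ O, z i := by rw [one_mul]; exact prod_equiv σ (by simp [O]) fun _ _ => rfl

theorem add_div_mul_eq_zero_iff {K : Type*} [Field K] {a b u v : K} (hb : b ≠ 0) :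
    u + a / b * v = 0 ↔ b * u + a * v = 0 := by
  rw [div_mul_eq_mul_div, add_div' _ _ _ hb, div_eq_zero_iff, or_iff_left hb, mul_comm u]

theorem Fin.sum_ite_lt_mul_pow_pow {R : Type*} [CommSemiring R] {n i k : ℕ} (hi : i ≤ n)
    (hk : k ≠ 0) (a b : R) :
    ∑ r : Fin n, (if (r : ℕ) < i then a * b ^ (r : ℕ) else 0) ^ k
      = a ^ k * ∑ r ∈ range i, (b ^ k) ^ r := by
  have hrange : (range n).filter (· < i) = range i := by
    ext r; simp only [mem_filter, mem_range]; omega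
  rw [Fin.sum_univ_eq_sum_range (fun r => (if r < i then a * b ^ r else 0) ^ k)]
  simp_rw [ite_pow, zero_pow hk]
  rw [← sum_filter, hrange, mul_sum]
  simp_rw [mul_pow, pow_right_comm b]

theorem exists_solution_of_pow_mul_pow_eq_one {q t : ℂ} (ht : ∀ k : ℕ, 1 ≤ k → t ^ k ≠ 1)
    {n m i j : ℕ} (hi : 1 ≤ i) (hin : i ≤ n) (hjm : j ≤ m) (htq : t ^ i * q ^ j = 1) :
    ∃ (x : Fin n → ℂ) (y : Fin m → ℂ), (x ≠ 0 ∨ y ≠ 0) ∧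
      ∀ k : ℕ, 1 ≤ k → ∑ i, x i ^ k + (1 - q ^ k) / (1 - t ^ k) * ∑ j, y j ^ k = 0 := by
  refine ⟨fun r => if (r : ℕ) < i then t ^ (r : ℕ) else 0,
    fun s => if (s : ℕ) < j then t ^ i * q ^ (s : ℕ) else 0, .inl fun h0 => ?_, fun k hk => ?_⟩
  · have := congrFun h0 ⟨0, by omega⟩
    simp only [pow_zero, Pi.zero_apply, ite_eq_right_iff, one_ne_zero] at this
    exact this hi
  have hx := Fin.sum_ite_lt_mul_pow_pow hin (by omega : k ≠ 0) 1 t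
  simp only [one_mul, one_pow] at hx
  rw [add_div_mul_eq_zero_iff (sub_ne_zero.mpr (ht k hk).symm), hx,
    Fin.sum_ite_lt_mul_pow_pow hjm (by omega : k ≠ 0)]
  have hgx := geom_sum_mul (t ^ k) i
  have hgy := geom_sum_mul (q ^ k) j
  have htqk : (t ^ k) ^ i * (q ^ k) ^ j = 1 := by rw [← pow_mul, ← pow_mul, mul_comm k,
    mul_comm k, pow_mul, pow_mul, ← mul_pow, htq, one_pow]
  linear_combination (-1 : ℂ) * hgx - (t ^ k) ^ i * hgy - htqk

theorem exists_pow_mul_pow_eq_one_of_solution {q t : ℂ} (hq : ∀ k : ℕ, 1 ≤ k → q ^ k ≠ 1)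
    (ht : ∀ k : ℕ, 1 ≤ k → t ^ k ≠ 1) {n m : ℕ} {x : Fin n → ℂ} {y : Fin m → ℂ}
    (hne : x ≠ 0 ∨ y ≠ 0)
    (hsol : ∀ k : ℕ, 1 ≤ k → k ≤ n + m →
      ∑ i, x i ^ k + (1 - q ^ k) / (1 - t ^ k) * ∑ j, y j ^ k = 0) :
    ∃ i j : ℕ, 1 ≤ i ∧ i ≤ n ∧ 1 ≤ j ∧ j ≤ m ∧ t ^ i * q ^ j = 1 := by
  set z : Fin n ⊕ Fin m → ℂ := Sum.elim x y
  set c : Fin n ⊕ Fin m → ℂ := Sum.elim (fun _ => t) (fun _ => q)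
  have hpow (k : ℕ) (hk : 1 ≤ k) (hkN : k ≤ Fintype.card (Fin n ⊕ Fin m)) :
      ∑ i, z i ^ k = ∑ i, (c i * z i) ^ k := by
    have := (add_div_mul_eq_zero_iff (sub_ne_zero.mpr (ht k hk).symm)).mp
      (hsol k hk (by simpa using hkN))
    simp only [z, c, Fintype.sum_sum_type, Sum.elim_inl, Sum.elim_inr, mul_pow, ← mul_sum]
    linear_combination this
  obtain ⟨σ, hσ⟩ :=
    Equiv.Perm.exists_comp_eq_of_map_univ_eq (Multiset.map_univ_eq_of_sum_pow_eq hpow)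
  obtain ⟨s, hs⟩ : ∃ s, z s ≠ 0 := by
    rcases hne with hx | hy
    · obtain ⟨i, hi⟩ := Function.ne_iff.mp hx
      exact ⟨.inl i, hi⟩
    · obtain ⟨j, hj⟩ := Function.ne_iff.mp hy
      exact ⟨.inr j, hj⟩
  set O := univ.filter (σ.SameCycle s)
  have hprod : ∏ i ∈ O, c i = 1 := σ.prod_sameCycle_eq_one hσ hs
  rw [← toLeft_disjSum_toRight (u := O), prod_disjSum] at hprod
  simp only [c, Sum.elim_inl, Sum.elim_inr, prod_const] at hprod
  have hO : 1 ≤ #O.toLeft + #O.toRight := by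
    rw [card_toLeft_add_card_toRight]
    exact card_pos.mpr ⟨s, mem_filter.mpr ⟨mem_univ s, .refl σ s⟩⟩
  refine ⟨#O.toLeft, #O.toRight, ?_, (card_le_univ _).trans_eq (Fintype.card_fin n), ?_,
    (card_le_univ _).trans_eq (Fintype.card_fin m), hprod⟩
  · refine Nat.one_le_iff_ne_zero.mpr fun h0 => hq _ (by omega) ?_
    simpa [h0] using hprod
  · refine Nat.one_le_iff_ne_zero.mpr fun h0 => ht _ (by omega) ?_
    simpa [h0] using hprod

theorem stmt0_general (q t : ℂ) (hq : ∀ k : ℕ, 1 ≤ k → q ^ k ≠ 1)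
    (ht : ∀ k : ℕ, 1 ≤ k → t ^ k ≠ 1)
    (n m : ℕ) :
    (∃ (x : Fin n → ℂ) (y : Fin m → ℂ),
      (x ≠ 0 ∨ y ≠ 0) ∧
      ∀ k : ℕ, 1 ≤ k → k ≤ n + m →
        ∑ i, x i ^ k + (1 - q ^ k) / (1 - t ^ k) * ∑ j, y j ^ k = 0) ↔
    ∃ i j : ℕ, 1 ≤ i ∧ i ≤ n ∧ 1 ≤ j ∧ j ≤ m ∧ t ^ i * q ^ j = 1 := by
  constructor
  · rintro ⟨x, y, hne, hsol⟩
    exact exists_pow_mul_pow_eq_one_of_solution hq ht hne hsol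
  · rintro ⟨i, j, hi, hin, -, hjm, htq⟩
    obtain ⟨x, y, hne, hsol⟩ := exists_solution_of_pow_mul_pow_eq_one ht hi hin hjm htq
    exact ⟨x, y, hne, fun k hk _ => hsol k hk⟩

theorem stmt0 (q t : ℂ) (hq : ∀ k : ℕ, 1 ≤ k → q ^ k ≠ 1)
    (ht : ∀ k : ℕ, 1 ≤ k → t ^ k ≠ 1)
    (n m : ℕ) (hn : 0 < n) (hm : 0 < m) :
    (∃ (x : Fin n → ℂ) (y : Fin m → ℂ),
      (x ≠ 0 ∨ y ≠ 0) ∧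
      ∀ k : ℕ, 1 ≤ k → k ≤ n + m →
        ∑ i, x i ^ k + (1 - q ^ k) / (1 - t ^ k) * ∑ j, y j ^ k = 0) ↔
    ∃ i j : ℕ, 1 ≤ i ∧ i ≤ n ∧ 1 ≤ j ∧ j ≤ m ∧ t ^ i * q ^ j = 1 :=
  stmt0_general q t hq ht n m
end

section
/- Suppose t and q are not roots of unity, $t^i q^j = 1$ for some $1 \le i \le n$, $1 \le j \le m$. Then the $(n+m)$-tuple given by $x_a = t^{1-a}$ for $1 \le a \le i$, $x_a = 0$ for $a > i$, $y_b = q^{-b} t^{1-i}$ for $1 \le b \le j$, $y_b = 0$ for $b > j$, satisfies $\sum_{a=1}^n x_a^k + \frac{1-q^k}{1-t^k}\sum_{b=1}^m y_b^k = 0$ for every $k \ge 1$. -/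
open Finset

private lemma stmt1_aux (T Q A : ℂ) (hT0 : T ≠ 0) (hQ0 : Q ≠ 0) (hA0 : A ≠ 0)
    (hTinv1 : T⁻¹ - 1 ≠ 0) (hQinv1 : Q⁻¹ - 1 ≠ 0) (hT1 : (1 : ℂ) - T ≠ 0) :
    (A⁻¹ - 1) / (T⁻¹ - 1) + (1 - Q) / (1 - T) * (T * A⁻¹ * Q⁻¹ * ((A - 1) / (Q⁻¹ - 1))) = 0 := by
  have hQ1 : (1 : ℂ) - Q ≠ 0 := by
    intro h
    apply hQinv1
    rw [(sub_eq_zero.mp h).symm]; ring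
  have h1 : T⁻¹ - 1 = (1 - T) / T := by field_simp
  have h2 : Q⁻¹ - 1 = (1 - Q) / Q := by field_simp
  rw [h1, h2]
  field_simp
  ring

theorem stmt1 (q t : ℂ) (hq : ∀ k : ℕ, 1 ≤ k → q ^ k ≠ 1)
    (ht : ∀ k : ℕ, 1 ≤ k → t ^ k ≠ 1)
    (n m i j : ℕ) (hi1 : 1 ≤ i) (hin : i ≤ n) (hj1 : 1 ≤ j) (hjm : j ≤ m)
    (hij : t ^ i * q ^ j = 1)
    (x : Fin n → ℂ) (y : Fin m → ℂ)
    (hx : ∀ a : Fin n, x a =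
      if (a : ℕ) + 1 ≤ i then t ^ (1 - (((a : ℕ) : ℤ) + 1)) else 0)
    (hy : ∀ b : Fin m, y b =
      if (b : ℕ) + 1 ≤ j then q ^ (-(((b : ℕ) : ℤ) + 1)) * t ^ (1 - (i : ℤ)) else 0) :
    ∀ k : ℕ, 1 ≤ k →
      ∑ a, x a ^ k + (1 - q ^ k) / (1 - t ^ k) * ∑ b, y b ^ k = 0 := by
  intro k hk
  have ht0 : t ≠ 0 := by
    intro h
    rw [h, zero_pow (by omega), zero_mul] at hij
    exact zero_ne_one hij
  have hq0 : q ≠ 0 := by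
    intro h
    rw [h, zero_pow (by omega), mul_zero] at hij
    exact zero_ne_one hij
  set T := t ^ k with hTdef
  set Q := q ^ k with hQdef
  have hT1 : T ≠ 1 := ht k hk
  have hQ1 : Q ≠ 1 := hq k hk
  have hT0 : T ≠ 0 := pow_ne_zero _ ht0
  have hQ0 : Q ≠ 0 := pow_ne_zero _ hq0
  have hrel : T ^ i * Q ^ j = 1 := by
    rw [hTdef, hQdef, ← pow_mul, ← pow_mul, mul_comm k i, mul_comm k j, pow_mul, pow_mul,
      ← mul_pow, hij, one_pow]
  have hTinv1 : T⁻¹ ≠ 1 := by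
    rw [Ne, inv_eq_one]; exact hT1
  have hQinv1 : Q⁻¹ ≠ 1 := by
    rw [Ne, inv_eq_one]; exact hQ1
  -- the x-sum
  have hS1 : ∑ a, x a ^ k = ((T⁻¹) ^ i - 1) / (T⁻¹ - 1) := by
    have h1 : ∑ a, x a ^ k
        = ∑ a : Fin n, (fun a : ℕ => if a + 1 ≤ i then (T⁻¹) ^ a else 0) (a : ℕ) := by
      refine Finset.sum_congr rfl fun a _ => ?_
      rw [hx a]
      by_cases h : (a : ℕ) + 1 ≤ i
      · simp only [h, if_true]
        have : (1 - (((a : ℕ) : ℤ) + 1)) = -((a : ℕ) : ℤ) := by ring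
        rw [this, zpow_neg, zpow_natCast, inv_pow, inv_pow, ← pow_mul, ← pow_mul, mul_comm]
      · simp only [h, if_false, zero_pow (by omega : k ≠ 0)]
    rw [h1, Fin.sum_univ_eq_sum_range (fun a : ℕ => if a + 1 ≤ i then (T⁻¹) ^ a else 0) n]
    rw [← Finset.sum_subset (Finset.range_subset_range.mpr hin)
      (fun a _ ha => by simp only [Finset.mem_range] at ha; simp [Nat.lt_iff_add_one_le.not.mp ha])]
    have h2 : ∀ a ∈ Finset.range i, (if a + 1 ≤ i then (T⁻¹) ^ a else 0) = (T⁻¹) ^ a := by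
      intro a ha
      simp only [Finset.mem_range] at ha
      simp [Nat.lt_iff_add_one_le.mp ha]
    rw [Finset.sum_congr rfl h2, geom_sum_eq hTinv1]
  -- the y-sum
  have hS2 : ∑ b, y b ^ k
      = T * (T ^ i)⁻¹ * Q⁻¹ * (((Q⁻¹) ^ j - 1) / (Q⁻¹ - 1)) := by
    have hc : (t ^ (1 - (i : ℤ))) ^ k = T * (T ^ i)⁻¹ := by
      have : (1 - (i : ℤ)) = 1 + -(i : ℕ) := by push_cast; ring
      rw [this, zpow_add₀ ht0, zpow_one, zpow_neg, zpow_natCast, mul_pow, inv_pow,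
        ← pow_mul, ← pow_mul, hTdef, mul_comm i k, mul_comm]
    have h1 : ∑ b, y b ^ k
        = ∑ b : Fin m, (fun b : ℕ =>
            if b + 1 ≤ j then (Q⁻¹) ^ (b + 1) * (T * (T ^ i)⁻¹) else 0) (b : ℕ) := by
      refine Finset.sum_congr rfl fun b _ => ?_
      rw [hy b]
      by_cases h : (b : ℕ) + 1 ≤ j
      · simp only [h, if_true]
        rw [mul_pow, hc]
        congr 1
        have : (-(((b : ℕ) : ℤ) + 1)) = -(((b : ℕ) + 1 : ℕ) : ℤ) := by push_cast [Nat.cast_add]; ring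
        rw [this, zpow_neg, zpow_natCast, inv_pow, inv_pow, ← pow_mul, ← pow_mul, mul_comm]
      · simp only [h, if_false, zero_pow (by omega : k ≠ 0)]
    rw [h1, Fin.sum_univ_eq_sum_range
      (fun b : ℕ => if b + 1 ≤ j then (Q⁻¹) ^ (b + 1) * (T * (T ^ i)⁻¹) else 0) m]
    rw [← Finset.sum_subset (Finset.range_subset_range.mpr hjm)
      (fun b _ hb => by simp only [Finset.mem_range] at hb; simp [Nat.lt_iff_add_one_le.not.mp hb])]
    have h2 : ∀ b ∈ Finset.range j,
        (if b + 1 ≤ j then (Q⁻¹) ^ (b + 1) * (T * (T ^ i)⁻¹) else 0)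
          = (Q⁻¹) ^ b * (Q⁻¹ * (T * (T ^ i)⁻¹)) := by
      intro b hb
      simp only [Finset.mem_range] at hb
      simp only [Nat.lt_iff_add_one_le.mp hb, if_true, pow_succ]
      ring
    rw [Finset.sum_congr rfl h2, ← Finset.sum_mul, geom_sum_eq hQinv1]
    ring
  rw [hS1, hS2]
  have hQj : Q ^ j = (T ^ i)⁻¹ :=
    eq_inv_of_mul_eq_one_left (by rw [mul_comm]; exact hrel)
  have hTi0 : T ^ i ≠ 0 := pow_ne_zero _ hT0
  have hTinv1' : T⁻¹ - 1 ≠ 0 := sub_ne_zero.mpr hTinv1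
  have hQinv1' : Q⁻¹ - 1 ≠ 0 := sub_ne_zero.mpr hQinv1
  have hT1' : (1 : ℂ) - T ≠ 0 := sub_ne_zero.mpr (Ne.symm hT1)
  rw [inv_pow T i, inv_pow Q j, hQj, inv_inv]
  exact stmt1_aux T Q (T ^ i) hT0 hQ0 hTi0 hTinv1' hQinv1' hT1'
end

section
/- Let $t$ be a complex number, $t \ne 1$, and let $w_1, \dots, w_N$ be pairwise distinct complex numbers. Then $\sum_{l=1}^N \prod_{k \ne l} \frac{w_l - t w_k}{w_l - w_k} = \frac{t^N - 1}{t - 1}$. -/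
/-!
The polynomial `Q = ∏ₖ (X - t wₖ)` has a `t`-difference quotient `D Q = (Q(X) - Q(tX)) / X`
of degree `< N`, whose coefficient of `X^(N-1)` is `1 - t^N`. The `t`-Leibniz rule applied to
`Q = (X - t w_l) ∏_{k ≠ l} (X - t wₖ)` shows `(D Q)(w_l) = (1 - t) ∏_{k ≠ l} (w_l - t wₖ)`,
even when `w_l = 0`, so by Lagrange interpolation at the nodes `wₖ` the sum, multiplied by
`1 - t`, is that coefficient.
-/

open Finset Polynomial

namespace Polynomial

variable {R : Type*} [CommRing R]

/-- `(p(X) - p(tX)) / X`: the Jackson `t`-derivative of `p` multiplied by `1 - t`, which avoids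
dividing by `1 - t`. -/
noncomputable def qDiff (t : R) (p : R[X]) : R[X] :=
  (p - p.comp (C t * X)).divX

theorem X_mul_qDiff (t : R) (p : R[X]) : X * qDiff t p = p - p.comp (C t * X) := by
  have h := X_mul_divX_add (p - p.comp (C t * X))
  rwa [coeff_sub, comp_C_mul_X_coeff, pow_zero, mul_one, sub_self, C_0, add_zero] at h

theorem coeff_qDiff (t : R) (p : R[X]) (n : ℕ) :
    (qDiff t p).coeff n = p.coeff (n + 1) * (1 - t ^ (n + 1)) := by
  rw [qDiff, coeff_divX, coeff_sub, comp_C_mul_X_coeff]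
  ring

theorem qDiff_mul (t : R) (p q : R[X]) :
    qDiff t (p * q) = qDiff t p * q + p.comp (C t * X) * qDiff t q :=
  isRegular_X.left <| by
    simp only [mul_add, ← mul_assoc, mul_comm _ (p.comp _), X_mul_qDiff]
    rw [mul_assoc, X_mul_qDiff, mul_comp]
    ring

theorem qDiff_X_sub_C (t a : R) : qDiff t (X - C a) = C (1 - t) := by
  apply isRegular_X.left
  dsimp only
  rw [X_mul_qDiff, sub_comp, X_comp, C_comp, C_sub, C_1]
  ring

theorem eval_qDiff_X_sub_C_mul (t a : R) (p : R[X]) :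
    (qDiff t ((X - C (t * a)) * p)).eval a = (1 - t) * p.eval a := by
  rw [qDiff_mul, qDiff_X_sub_C]
  simp

theorem degree_qDiff_lt {t : R} {p : R[X]} {n : ℕ} (hp : p.natDegree ≤ n) :
    (qDiff t p).degree < n :=
  degree_lt_iff_coeff_zero _ _ |>.mpr fun m hm => by
    rw [coeff_qDiff, coeff_eq_zero_of_natDegree_lt (by omega), zero_mul]

theorem Monic.coeff_qDiff_natDegree_sub_one (t : R) {p : R[X]} (hp : p.Monic) :
    (qDiff t p).coeff (p.natDegree - 1) = 1 - t ^ p.natDegree := by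
  rcases hn : p.natDegree with _ | n
  · rw [hp.natDegree_eq_zero.mp hn, coeff_qDiff, coeff_one]
    simp
  · rw [Nat.add_sub_cancel, coeff_qDiff, ← hn, hp.coeff_natDegree, one_mul]

end Polynomial

theorem stmt4 (t : ℂ) (ht : t ≠ 1) (N : ℕ) (w : Fin N → ℂ)
    (hw : Function.Injective w) :
    ∑ l, ∏ k ∈ Finset.univ.erase l, (w l - t * w k) / (w l - w k) =
      (t ^ N - 1) / (t - 1) := by
  have hQ : (Lagrange.nodal univ (t * w ·)).natDegree = #(univ : Finset (Fin N)) :=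
    Lagrange.natDegree_nodal
  have hnode (l : Fin N) : (qDiff t (Lagrange.nodal univ (t * w ·))).eval (w l) =
      (1 - t) * ∏ k ∈ univ.erase l, (w l - t * w k) := by
    rw [Lagrange.nodal_eq_mul_nodal_erase (mem_univ l), eval_qDiff_X_sub_C_mul,
      Lagrange.eval_nodal]
  have hcoeff := Lagrange.coeff_eq_sum hw.injOn (degree_qDiff_lt (t := t) hQ.le)
  rw [← hQ, Lagrange.nodal_monic.coeff_qDiff_natDegree_sub_one, hQ, card_univ,
    Fintype.card_fin] at hcoeff
  simp only [hnode, mul_div_assoc, ← mul_sum, ← prod_div_distrib] at hcoeff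
  rw [eq_div_iff (sub_ne_zero.mpr ht)]
  linear_combination hcoeff
end

section
/- Let $q, t$ be complex numbers with $t \ne 1$, let $x_1,\dots,x_n$ and $y_1,\dots,y_m$ be complex numbers such that all $x_i$ are pairwise distinct, all $y_j$ are pairwise distinct, and $x_i \ne y_j$ for all $i, j$. Define $A_i = \prod_{k \ne i} \frac{x_i - t x_k}{x_i - x_k} \prod_{j=1}^m \frac{x_i - q y_j}{x_i - y_j}$ and $B_j = \prod_{i=1}^n \frac{y_j - t x_i}{y_j - x_i} \prod_{l \ne j} \frac{y_j - q y_l}{y_j - y_l}$. Then $\sum_{i=1}^n A_i + \frac{1-q}{1-t} \sum_{j=1}^m B_j = \frac{t^n q^m - 1}{t - 1}$. -/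
/-!
Put `z = (x, y)` and `σ = (t, …, t, q, …, q)`; then `(1 - t)` times the left-hand side is
`∑ₐ (1 - σₐ) ∏_{k ≠ a} (zₐ - σₖ zₖ) / (zₐ - zₖ)`. The polynomial
`f = ∏ₖ (X - σₖ zₖ) - (∏ₖ σₖ) ∏ₖ (X - zₖ)` vanishes at `0`, so `g = f / X` has degree `< N`,
`X^(N-1)`-coefficient `1 - ∏ₖ σₖ`, and `g(zₐ) = (1 - σₐ) ∏_{k ≠ a} (zₐ - σₖ zₖ)`, also when
`zₐ = 0`. Reading off that coefficient from Lagrange interpolation at the nodes `zₐ` gives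
`∑ₐ (1 - σₐ) ∏_{k ≠ a} (zₐ - σₖ zₖ) / (zₐ - zₖ) = 1 - ∏ₖ σₖ`.
-/

open Finset Polynomial Lagrange

section

variable {F ι : Type*} [Field F] (s : Finset ι) (σ z : ι → F)

theorem coeff_zero_nodal_mul_sub_C_prod_mul_nodal :
    (nodal s (σ * z) - C (∏ k ∈ s, σ k) * nodal s z).coeff 0 = 0 := by
  rw [coeff_zero_eq_eval_zero, eval_sub, eval_mul, eval_C, eval_nodal, eval_nodal,
    ← prod_mul_distrib, sub_eq_zero]
  exact prod_congr rfl fun k _ => by simp only [Pi.mul_apply]; ring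

theorem eval_divX_nodal_mul_sub_C_prod_mul_nodal [DecidableEq ι] {b : ι} (hb : b ∈ s) :
    (divX (nodal s (σ * z) - C (∏ k ∈ s, σ k) * nodal s z)).eval (z b) =
      (1 - σ b) * ∏ k ∈ s.erase b, (z b - σ k * z k) := by
  set A := nodal (s.erase b) (σ * z)
  set B := C (∏ k ∈ s.erase b, σ k) * nodal (s.erase b) z
  have hAB : A - B = X * divX (A - B) := by
    have h := X_mul_divX_add (A - B)
    rwa [coeff_zero_nodal_mul_sub_C_prod_mul_nodal, C_0, add_zero, eq_comm] at h
  have hsplit : nodal s (σ * z) - C (∏ k ∈ s, σ k) * nodal s z =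
      X * ((1 - C (σ b)) * A + C (σ b) * (X - C (z b)) * divX (A - B)) := by
    rw [nodal_eq_mul_nodal_erase hb, nodal_eq_mul_nodal_erase hb, ← mul_prod_erase s σ hb]
    simp only [Pi.mul_apply, C_mul]
    linear_combination (C (σ b) * (X - C (z b))) * hAB
  have hdivX : ∀ p : F[X], divX (X * p) = p := fun p => by
    ext n; simp [coeff_divX, coeff_X_mul]
  rw [hsplit, hdivX]
  simp [A, eval_nodal]

theorem sum_one_sub_mul_prod_erase_div_sub [DecidableEq ι] (hz : Set.InjOn z s) :
    ∑ a ∈ s, (1 - σ a) * ∏ k ∈ s.erase a, (z a - σ k * z k) / (z a - z k) =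
      1 - ∏ k ∈ s, σ k := by
  rcases s.eq_empty_or_nonempty with rfl | hs
  · simp
  set f := nodal s (σ * z) - C (∏ k ∈ s, σ k) * nodal s z
  have hcard : #s - 1 + 1 = #s := Nat.sub_add_cancel hs.card_pos
  have hf_natDegree : f.natDegree ≤ #s :=
    (natDegree_sub_le_of_le natDegree_nodal.le
      ((natDegree_C_mul_le _ _).trans natDegree_nodal.le)).trans (max_self _).le
  have hdeg : (divX f).degree < #s := by
    refine (degree_le_natDegree).trans_lt ?_
    rw [natDegree_divX_eq_natDegree_tsub_one]
    exact_mod_cast (by omega : f.natDegree - 1 < #s)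
  have hcoeff : (divX f).coeff (#s - 1) = 1 - ∏ k ∈ s, σ k := by
    have hmonic : ∀ v : ι → F, (nodal s v).coeff #s = 1 := fun v => by
      simpa [natDegree_nodal] using (nodal_monic (s := s) (v := v)).coeff_natDegree
    simp only [f, coeff_divX, hcard, coeff_sub, coeff_C_mul, hmonic, mul_one]
  rw [← hcoeff, coeff_eq_sum hz hdeg]
  refine sum_congr rfl fun a ha => ?_
  rw [eval_divX_nodal_mul_sub_C_prod_mul_nodal s σ z ha, prod_div_distrib, mul_div_assoc]

end

theorem prod_univ_erase_inl {α β M : Type*} [Fintype α] [Fintype β] [DecidableEq α]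
    [DecidableEq β] [CommMonoid M] (i : α) (g : α ⊕ β → M) :
    ∏ k ∈ univ.erase (Sum.inl i), g k =
      (∏ k ∈ univ.erase i, g (Sum.inl k)) * ∏ j, g (Sum.inr j) := by
  rw [show univ.erase (Sum.inl i) = (univ.erase i).disjSum (univ : Finset β) by
    ext k; cases k <;> simp, prod_disjSum]

theorem prod_univ_erase_inr {α β M : Type*} [Fintype α] [Fintype β] [DecidableEq α]
    [DecidableEq β] [CommMonoid M] (j : β) (g : α ⊕ β → M) :
    ∏ k ∈ univ.erase (Sum.inr j), g k =
      (∏ i, g (Sum.inl i)) * ∏ l ∈ univ.erase j, g (Sum.inr l) := by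
  rw [show univ.erase (Sum.inr j) = (univ : Finset α).disjSum (univ.erase j) by
    ext k; cases k <;> simp, prod_disjSum]

theorem stmt5_general (q t : ℂ) (ht : t ≠ 1) (n m : ℕ)
    (x : Fin n → ℂ) (y : Fin m → ℂ)
    (hx : Function.Injective x) (hy : Function.Injective y)
    (hxy : ∀ i j, x i ≠ y j) :
    ∑ i, ((∏ k ∈ Finset.univ.erase i, (x i - t * x k) / (x i - x k)) *
        ∏ j, (x i - q * y j) / (x i - y j)) +
      (1 - q) / (1 - t) *
      ∑ j, ((∏ i, (y j - t * x i) / (y j - x i)) *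
        ∏ l ∈ Finset.univ.erase j, (y j - q * y l) / (y j - y l)) =
    (t ^ n * q ^ m - 1) / (t - 1) := by
  have h := sum_one_sub_mul_prod_erase_div_sub univ (Sum.elim (fun _ => t) (fun _ => q))
    (Sum.elim x y) (hx.sumElim hy hxy).injOn
  simp only [Fintype.sum_sum_type, Fintype.prod_sum_type, prod_univ_erase_inl,
    prod_univ_erase_inr, Sum.elim_inl, Sum.elim_inr, prod_const, card_univ,
    Fintype.card_fin, ← mul_sum] at h
  have h1t : (1 : ℂ) - t ≠ 0 := sub_ne_zero.mpr ht.symm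
  have ht1 : t - 1 ≠ 0 := sub_ne_zero.mpr ht
  field_simp
  linear_combination (t - 1) * h

theorem stmt5 (q t : ℂ) (ht : t ≠ 1) (n m : ℕ) (hn : 0 < n) (hm : 0 < m)
    (x : Fin n → ℂ) (y : Fin m → ℂ)
    (hx : Function.Injective x) (hy : Function.Injective y)
    (hxy : ∀ i j, x i ≠ y j) :
    ∑ i, ((∏ k ∈ Finset.univ.erase i, (x i - t * x k) / (x i - x k)) *
        ∏ j, (x i - q * y j) / (x i - y j)) +
      (1 - q) / (1 - t) *
      ∑ j, ((∏ i, (y j - t * x i) / (y j - x i)) *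
        ∏ l ∈ Finset.univ.erase j, (y j - q * y l) / (y j - y l)) =
    (t ^ n * q ^ m - 1) / (t - 1) :=
  stmt5_general q t ht n m x y hx hy hxy
end

section
/- Let $t, w$ be complex numbers and $x_1, \dots, x_n$ pairwise distinct complex numbers with $1 - t^{-1} x_i w \ne 0$ for all $i$ and $t \ne 0$. Then $\prod_{i=1}^n \frac{1 - x_i w}{1 - t^{-1} x_i w} - 1 = t^n - 1 + (1-t) \sum_{i=1}^n \frac{\prod_{k \ne i} \frac{x_i - t x_k}{x_i - x_k}}{1 - t^{-1} x_i w}$. -/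
/-! Both sides are rational functions of `z = t⁻¹ w`; homogenising the denominators `1 - x_i z`
to `y - x_i z`, the identity is proved by induction on the set of indices. When an index `j`
is added, the new coefficient `C_j = ∏_k (x_j - t x_k) / (x_j - x_k)` is the left-hand side of
the induction hypothesis at `(y, z) = (x_j, 1)`, and the remaining terms match after the
two-term partial fraction decomposition of `1 / ((y - x_i z) (y - x_j z))`. -/

open Finset

variable {K ι : Type*} [Field K] [DecidableEq ι]

def partialFractionCoeff (t : K) (x : ι → K) (s : Finset ι) (i : ι) : K :=
  ∏ k ∈ s.erase i, (x i - t * x k) / (x i - x k)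

lemma partialFractionCoeff_insert_of_mem (t : K) (x : ι → K) {s : Finset ι} {i j : ι}
    (hj : j ∉ s) (hi : i ∈ s) :
    partialFractionCoeff t x (insert j s) i =
      (x i - t * x j) / (x i - x j) * partialFractionCoeff t x s i := by
  have hji : j ≠ i := by rintro rfl; exact hj hi
  rw [partialFractionCoeff, erase_insert_of_ne hji, prod_insert (fun h => hj (mem_of_mem_erase h)),
    partialFractionCoeff]

lemma partialFractionCoeff_insert_self (t : K) (x : ι → K) {s : Finset ι} {j : ι} (hj : j ∉ s) :
    partialFractionCoeff t x (insert j s) j = ∏ k ∈ s, (x j - t * x k) / (x j - x k) := by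
  rw [partialFractionCoeff, erase_insert hj]

lemma partial_fraction_step (t y z : K) {a b : K} (hab : a ≠ b) (ha : y - a * z ≠ 0)
    (hb : y - b * z ≠ 0) :
    t / (y - a * z) + (1 - t) * y / (y - b * z) / (y - a * z) =
      (a - t * b) / (a - b) / (y - a * z) + (1 - t) * b / (y - b * z) / (b - a) := by
  have hab' : a - b ≠ 0 := sub_ne_zero.mpr hab
  have hba : b - a ≠ 0 := sub_ne_zero.mpr hab.symm
  rw [mul_comm a, mul_comm b] at *
  field_simp
  ring

theorem prod_div_eq_pow_add_sum_partialFractionCoeff (t y z : K) (x : ι → K) (s : Finset ι)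
    (hx : Set.InjOn x s) (hy : ∀ i ∈ s, y - x i * z ≠ 0) :
    ∏ i ∈ s, (y - t * x i * z) / (y - x i * z) =
      t ^ #s + (1 - t) * y * ∑ i ∈ s, partialFractionCoeff t x s i / (y - x i * z) := by
  induction s using Finset.induction_on generalizing y z with
  | empty => simp
  | @insert j s hj ih =>
    have hxs : Set.InjOn x s := hx.mono (subset_insert j s)
    have hxj : ∀ i ∈ s, x i ≠ x j := fun i hi h =>
      hj (hx (mem_insert_of_mem hi) (mem_insert_self j s) h ▸ hi)
    have hyj := hy j (mem_insert_self j s)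
    have hys : ∀ i ∈ s, y - x i * z ≠ 0 := fun i hi => hy i (mem_insert_of_mem hi)
    have hCj : partialFractionCoeff t x (insert j s) j =
        t ^ #s + (1 - t) * x j * ∑ i ∈ s, partialFractionCoeff t x s i / (x j - x i) := by
      have := ih (x j) 1 hxs fun i hi => by simpa [sub_eq_zero] using (hxj i hi).symm
      simpa only [mul_one, partialFractionCoeff_insert_self t x hj] using this
    have hsum : t * ∑ i ∈ s, partialFractionCoeff t x s i / (y - x i * z) +
          (1 - t) * y / (y - x j * z) * ∑ i ∈ s, partialFractionCoeff t x s i / (y - x i * z) =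
        ∑ i ∈ s, partialFractionCoeff t x (insert j s) i / (y - x i * z) +
          (1 - t) * x j / (y - x j * z) * ∑ i ∈ s, partialFractionCoeff t x s i / (x j - x i) := by
      simp only [mul_sum, ← sum_add_distrib]
      refine sum_congr rfl fun i hi => ?_
      rw [partialFractionCoeff_insert_of_mem t x hj hi]
      linear_combination partialFractionCoeff t x s i *
        partial_fraction_step t y z (hxj i hi) (hys i hi) hyj
    have hfactor : (y - t * x j * z) / (y - x j * z) = t + (1 - t) * y / (y - x j * z) := by
      field_simp
      ring
    rw [prod_insert hj, sum_insert hj, card_insert_of_notMem hj, ih y z hxs hys, hCj, hfactor]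
    linear_combination (1 - t) * y * hsum

theorem stmt6 (t w : ℂ) (ht : t ≠ 0) (n : ℕ) (x : Fin n → ℂ)
    (hx : Function.Injective x) (hw : ∀ i, 1 - t⁻¹ * x i * w ≠ 0) :
    ∏ i, (1 - x i * w) / (1 - t⁻¹ * x i * w) - 1 =
      t ^ n - 1 + (1 - t) * ∑ i,
        (∏ k ∈ Finset.univ.erase i, (x i - t * x k) / (x i - x k)) /
          (1 - t⁻¹ * x i * w) := by
  have hden (i : Fin n) : x i * (t⁻¹ * w) = t⁻¹ * x i * w := by ring
  have hnum (i : Fin n) : t * x i * (t⁻¹ * w) = x i * w := by field_simp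
  have key := prod_div_eq_pow_add_sum_partialFractionCoeff t 1 (t⁻¹ * w) x univ hx.injOn
    fun i _ => hden i ▸ hw i
  simp only [hnum, hden, mul_one, card_univ, Fintype.card_fin] at key
  rw [key]
  unfold partialFractionCoeff
  ring
end

section
/- For every partition $\lambda$ contained in the fat $(n,m)$-hook (i.e. $\lambda_{n+1} \le m$) and for the evaluation map $F(\lambda) = (q^{\lambda_1}, \dots, q^{\lambda_n}, t^{\mu'_1} t^n, \dots, t^{\mu'_m} t^n)$ with $\mu = (\lambda_{n+1}, \lambda_{n+2}, \dots)$, the shifted power sum satisfies $p_r^*(q^\lambda, t) = \sum_{i=1}^n (x_i^r - 1) t^{r(i-1)} + \frac{1-q^r}{1-t^r} \sum_{j=1}^m (y_j^r - t^{rn}) q^{r(j-1)}$ where $(x_1,\dots,x_n,y_1,\dots,y_m) = F(\lambda)$. -/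
open Finset

theorem stmt12 (n m : ℕ) (l : ℕ → ℕ) (hl : Antitone l)
    (hfin : ∃ K, ∀ i, K ≤ i → l i = 0) (hhook : l n ≤ m)
    (q t : ℂ) (hq : ∀ k : ℕ, 1 ≤ k → q ^ k ≠ 1) (ht : ∀ k : ℕ, 1 ≤ k → t ^ k ≠ 1)
    (r : ℕ) (hr : 1 ≤ r)
    (x : Fin n → ℂ) (y : Fin m → ℂ)
    (hx : ∀ i : Fin n, x i = q ^ l (i : ℕ))
    (hy : ∀ j : Fin m, y j = t ^ (Nat.card {i : ℕ | (j : ℕ) < l (n + i)}) * t ^ n) :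
    ∑' i : ℕ, ((q ^ l i) ^ r - 1) * t ^ (r * i) =
      ∑ i : Fin n, (x i ^ r - 1) * t ^ (r * (i : ℕ)) +
      (1 - q ^ r) / (1 - t ^ r) *
        ∑ j : Fin m, (y j ^ r - t ^ (r * n)) * q ^ (r * (j : ℕ)) := by
  obtain ⟨K, hK⟩ := hfin
  set N := max K n with hN
  have hnN : n ≤ N := le_max_right _ _
  have hlN : ∀ i, N ≤ i → l i = 0 := fun i hi => hK i (le_trans (le_max_left _ _) hi)
  set M := N - n with hM
  have hNM : N = n + M := by omega
  set c : ℕ → ℕ := fun j => Nat.card {i : ℕ | j < l (n + i)} with hc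
  -- key combinatorial fact
  have hA : ∀ j i : ℕ, i < c j ↔ j < l (n + i) := by
    intro j i
    have hdc : ∀ a b : ℕ, a ≤ b → j < l (n + b) → j < l (n + a) :=
      fun a b hab hb => lt_of_lt_of_le hb (hl (by omega))
    have hfinS : {i : ℕ | j < l (n + i)}.Finite := by
      apply Set.Finite.subset (Set.finite_Iio N)
      intro k hk
      simp only [Set.mem_setOf_eq] at hk
      simp only [Set.mem_Iio]
      by_contra h
      push_neg at h
      have : l (n + k) = 0 := hlN _ (by omega)
      omega
    have hcn : c j = {i : ℕ | j < l (n + i)}.ncard := rfl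
    constructor
    · intro h
      by_contra hnot
      have hsub : {i : ℕ | j < l (n + i)} ⊆ Set.Iio i := by
        intro k hk
        simp only [Set.mem_setOf_eq] at hk
        simp only [Set.mem_Iio]
        by_contra hk2
        push_neg at hk2
        exact hnot (hdc i k hk2 hk)
      have h2 := Set.ncard_le_ncard hsub (Set.finite_Iio i)
      have h3 : (Set.Iio i).ncard = i := by simp [Set.ncard_eq_toFinset_card']
      omega
    · intro h
      have hsub : Set.Iic i ⊆ {i : ℕ | j < l (n + i)} := by
        intro k hk
        simp only [Set.mem_Iic] at hk
        exact hdc k i hk h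
      have h2 := Set.ncard_le_ncard hsub hfinS
      have h3 : (Set.Iic i).ncard = i + 1 := by simp [Set.ncard_eq_toFinset_card']
      omega
  have hcM : ∀ j, c j ≤ M := by
    intro j
    by_contra h
    push_neg at h
    have := (hA j M).1 h
    have : l (n + M) = 0 := hlN _ (by omega)
    omega
  have hlm : ∀ i : ℕ, l (n + i) ≤ m := fun i => le_trans (hl (by omega)) hhook
  have htr : (1 : ℂ) - t ^ r ≠ 0 := by
    intro h
    exact ht r hr (by linear_combination -h)
  -- tsum is a finite sum
  set f : ℕ → ℂ := fun i => ((q ^ l i) ^ r - 1) * t ^ (r * i) with hf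
  have htsum : ∑' i : ℕ, f i = ∑ i ∈ Finset.range N, f i := by
    apply tsum_eq_sum
    intro b hb
    simp only [Finset.mem_range, not_lt] at hb
    simp [hf, hlN b hb]
  rw [htsum, hNM, Finset.sum_range_add]
  congr 1
  · simp only [hx]
    rw [Fin.sum_univ_eq_sum_range (fun i => ((q ^ l i) ^ r - 1) * t ^ (r * i)) n]
  · -- second part
    have key : ∀ i ∈ Finset.range M,
        f (n + i) = ∑ j ∈ Finset.range m,
          (if j < l (n + i) then (q ^ r) ^ j * ((q ^ r - 1) * t ^ (r * (n + i))) else 0) := by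
      intro i _
      rw [← Finset.sum_filter]
      have hfil : (Finset.range m).filter (fun j => j < l (n + i)) = Finset.range (l (n + i)) := by
        ext a
        simp only [Finset.mem_filter, Finset.mem_range]
        constructor
        · exact fun h => h.2
        · exact fun h => ⟨lt_of_lt_of_le h (hlm i), h⟩
      rw [hfil, ← Finset.sum_mul]
      simp only [hf]
      rw [← mul_assoc, geom_sum_mul, ← pow_mul, ← pow_mul, Nat.mul_comm (l (n + i)) r]
    rw [Finset.sum_congr rfl key, Finset.sum_comm, Finset.mul_sum]
    simp only [hy]
    rw [Fin.sum_univ_eq_sum_range (fun j => (1 - q ^ r) / (1 - t ^ r) *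
      (((t ^ Nat.card {i : ℕ | j < l (n + i)} * t ^ n) ^ r - t ^ (r * n)) * q ^ (r * j))) m]
    apply Finset.sum_congr rfl
    intro j hj
    simp only [Finset.mem_range] at hj
    rw [← Finset.sum_filter]
    have hfil2 : (Finset.range M).filter (fun i => j < l (n + i)) = Finset.range (c j) := by
      ext a
      simp only [Finset.mem_filter, Finset.mem_range, ← hA j a]
      constructor
      · exact fun h => h.2
      · exact fun h => ⟨lt_of_lt_of_le h (hcM j), h⟩
    rw [hfil2]
    show _ = (1 - q ^ r) / (1 - t ^ r) * (((t ^ c j * t ^ n) ^ r - t ^ (r * n)) * q ^ (r * j))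
    have hyj : (t ^ c j * t ^ n) ^ r = (t ^ r) ^ c j * t ^ (r * n) := by
      rw [mul_pow, ← pow_mul, ← pow_mul, mul_comm (c j) r, mul_comm n r, pow_mul]
    rw [hyj]
    have hgeom : ((t ^ r) ^ c j - 1 : ℂ) = (∑ i ∈ Finset.range (c j), (t ^ r) ^ i) * (t ^ r - 1) :=
      (geom_sum_mul _ _).symm
    have hlhs : ∑ i ∈ Finset.range (c j), (q ^ r) ^ j * ((q ^ r - 1) * t ^ (r * (n + i)))
        = (q ^ r) ^ j * (q ^ r - 1) * t ^ (r * n) * ∑ i ∈ Finset.range (c j), (t ^ r) ^ i := by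
      rw [Finset.mul_sum]
      apply Finset.sum_congr rfl
      intro i _
      rw [mul_add r n i, pow_add, ← pow_mul, mul_comm r i, pow_mul]
      ring
    rw [hlhs]
    have : ((t ^ r) ^ c j * t ^ (r * n) - t ^ (r * n) : ℂ) = t ^ (r * n) * ((∑ i ∈ Finset.range (c j), (t ^ r) ^ i) * (t ^ r - 1)) := by
      rw [← hgeom]; ring
    rw [this, pow_mul q r j]
    field_simp
    ring
end
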